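/- Let S be the gluing of affine semigroups S_1 and S_2 with G(S_1) ∩ G(S_2) = dℤ. Then Betti(S) = Betti(S_1) ∪ Betti(S_2) ∪ {d}. -/

import Mathlib

open Finset

variable {M : Type*} [AddCommMonoid M] {r : ℕ}

/-- The factorization homomorphism associated to the generating tuple `A`. -/
def phi (A : Fin r → M) (u : Fin r → ℕ) : M := ∑ i, u i • A i

/-- One step of the relation `R`: two factorizations of `a` with nonzero dot product. -/
def step (A : Fin r → M) (a : M) (u v : Fin r → ℕ) : Prop :=
  phi A u = a ∧ phi A v = a ∧ (∑ i, u i * v i) ≠ 0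

/-- The relation `R` on the fiber of `a`: connected by a chain of factorizations with
consecutive nonzero dot products. -/
def Rrel (A : Fin r → M) (a : M) : (Fin r → ℕ) → (Fin r → ℕ) → Prop :=
  Relation.ReflTransGen (step A a)

/-- `a` is a Betti element: its fiber has more than one `R`-class. -/
def IsBetti (A : Fin r → M) (a : M) : Prop :=
  ∃ u v : Fin r → ℕ, phi A u = a ∧ phi A v = a ∧ ¬ Rrel A a u v

/-- `a` is Betti-minimal: a Betti element minimal with respect to `b ≺ a ↔ a - b ∈ S`. -/
def BettiMinimal (A : Fin r → M) (a : M) : Prop :=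
  IsBetti A a ∧ ∀ b : M, IsBetti A b → (∃ c : M, a = b + c) → b = a

/-- `a` has a unique presentation: exactly two factorizations, with disjoint support. -/
def HasUniquePres (A : Fin r → M) (a : M) : Prop :=
  ∃ u v : Fin r → ℕ, u ≠ v ∧ {w : Fin r → ℕ | phi A w = a} = {u, v} ∧
    (∑ i, u i * v i) = 0

/-- The monoid generated by `A` is uniquely presented: every Betti element has exactly two
factorizations, with disjoint support. -/
def UniquelyPresented (A : Fin r → M) : Prop :=
  ∀ a : M, IsBetti A a → HasUniquePres A a

/-!
Write a factorization over `A₁ ⊔ A₂` as a pair `(w₁, w₂)` and fix factorizations `δ₁`, `δ₂` of `d`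
over `A₁` and `A₂`. Since `G(S₁) ∩ G(S₂) = dℤ`, two factorizations of the same element differ, up
to changing each component within its own fiber, by trading `k • δ₁` for `k • δ₂` for some `k`.
This trade can be made one copy of `d` at a time through factorizations that share support, unless
the element is `d` itself; so outside `Betti(S₁) ∪ Betti(S₂) ∪ {d}` every fiber is one `R`-class.

Conversely, for `a ∈ G(S₁)` the second component of a factorization of `a` evaluates to some `k • d`
with `k ∈ ℕ` (as `S` is reduced), and `(w₁, w₂) ↦ w₁ + k • δ₁` maps `R`-chains of `S` to `R`-chains
of `S₁`; hence Betti elements of `S₁`, and symmetrically of `S₂`, remain Betti in `S`. Finally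
`(δ₁, 0)` and `(0, δ₂)` lie in different `R`-classes of `d`: a factorization of `d` sharing support
with some `(w₁, 0)` has nonzero first component, which forces its second component to vanish.
-/

lemma Fin.append_inj {r₁ r₂ : ℕ} {α : Type*} {x₁ y₁ : Fin r₁ → α} {x₂ y₂ : Fin r₂ → α} :
    Fin.append x₁ x₂ = Fin.append y₁ y₂ ↔ x₁ = y₁ ∧ x₂ = y₂ := by
  refine ⟨fun h => ⟨funext fun i => ?_, funext fun i => ?_⟩, fun ⟨h₁, h₂⟩ => h₁ ▸ h₂ ▸ rfl⟩
  · simpa using congrFun h (Fin.castAdd r₂ i)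
  · simpa using congrFun h (Fin.natAdd r₁ i)

lemma Fin.range_append {r₁ r₂ : ℕ} {α : Type*} (x₁ : Fin r₁ → α) (x₂ : Fin r₂ → α) :
    Set.range (Fin.append x₁ x₂) = Set.range x₁ ∪ Set.range x₂ := by
  rw [← Set.Sum.elim_range, ← Fin.append_comp_sumElim]
  exact (EquivLike.range_comp _ finSumFinEquiv).symm

lemma Fin.exists_eq_append {r₁ r₂ : ℕ} {α : Type*} (w : Fin (r₁ + r₂) → α) :
    ∃ w₁ w₂, w = Fin.append w₁ w₂ :=
  ⟨_, _, Fin.append_castAdd_natAdd.symm⟩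

lemma Fin.append_eq_append_comp_finAddFlip {r₁ r₂ : ℕ} {α : Type*} (x₁ : Fin r₁ → α)
    (x₂ : Fin r₂ → α) : Fin.append x₂ x₁ = Fin.append x₁ x₂ ∘ finAddFlip := by
  ext i
  induction i using Fin.addCases <;> simp [finAddFlip_apply_castAdd, finAddFlip_apply_natAdd]

section Factorizations

variable {A : Fin r → M}

variable (A) in
@[simp] lemma phi_zero : phi A 0 = 0 := by simp [phi]

variable (A) in
lemma phi_add (u v : Fin r → ℕ) : phi A (u + v) = phi A u + phi A v := by
  simp [phi, add_smul, sum_add_distrib]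

variable (A) in
lemma phi_nsmul (k : ℕ) (u : Fin r → ℕ) : phi A (k • u) = k • phi A u := by
  simp [phi, mul_smul, smul_sum]

lemma phi_mem {S : AddSubmonoid M} (hA : ∀ i, A i ∈ S) (u : Fin r → ℕ) : phi A u ∈ S :=
  AddSubmonoid.sum_mem _ fun i _ => AddSubmonoid.nsmul_mem _ (hA i) _

lemma exists_phi_eq_of_mem_closure {x : M} (hx : x ∈ AddSubmonoid.closure (Set.range A)) :
    ∃ u, phi A u = x := by
  obtain ⟨u, rfl⟩ := AddSubmonoid.mem_closure_range_iff_of_fintype.1 hx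
  exact ⟨u, rfl⟩

variable (A) in
lemma phi_eq_add_of_ne_zero {u : Fin r → ℕ} {j : Fin r} (hj : u j ≠ 0) :
    phi A u = A j + phi A (u - Pi.single j 1) := by
  have hu : u = Pi.single j 1 + (u - Pi.single j 1) := by
    ext i
    rcases eq_or_ne i j with rfl | hij
    · simp only [Pi.add_apply, Pi.sub_apply, Pi.single_eq_same]; omega
    · simp [Pi.single_eq_of_ne hij]
  conv_lhs => rw [hu, phi_add]
  simp [phi, Pi.single_apply]

lemma sum_mul_ne_zero_iff {u v : Fin r → ℕ} : ∑ i, u i * v i ≠ 0 ↔ ∃ i, u i ≠ 0 ∧ v i ≠ 0 := by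
  simp [sum_eq_zero_iff]

lemma sum_mul_self_ne_zero {u : Fin r → ℕ} (hu : u ≠ 0) : ∑ i, u i * u i ≠ 0 := by
  obtain ⟨i, hi⟩ := Function.ne_iff.1 hu
  exact sum_mul_ne_zero_iff.2 ⟨i, hi, hi⟩

lemma step_symm {a : M} {u v : Fin r → ℕ} (h : step A a u v) : step A a v u :=
  ⟨h.2.1, h.1, by simpa only [mul_comm] using h.2.2⟩

variable (A) in
instance (a : M) : Std.Symm (step A a) := ⟨fun _ _ => step_symm⟩

lemma Rrel.symm {a : M} {u v : Fin r → ℕ} (h : Rrel A a u v) : Rrel A a v u :=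
  Std.Symm.symm (r := Relation.ReflTransGen (step A a)) _ _ h

lemma rrel_of_not_isBetti {a : M} (h : ¬ IsBetti A a) {u v : Fin r → ℕ} (hu : phi A u = a)
    (hv : phi A v = a) : Rrel A a u v := by
  by_contra huv
  exact h ⟨u, v, hu, hv, huv⟩

end Factorizations

section Append

variable {r₁ r₂ : ℕ} {A₁ : Fin r₁ → M} {A₂ : Fin r₂ → M} {b : M}

variable (A₁ A₂) in
lemma phi_append (u₁ : Fin r₁ → ℕ) (u₂ : Fin r₂ → ℕ) :
    phi (Fin.append A₁ A₂) (Fin.append u₁ u₂) = phi A₁ u₁ + phi A₂ u₂ := by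
  simp [phi, Fin.sum_univ_add]

lemma phi_mem_closure_union_left (w : Fin r₁ → ℕ) :
    phi A₁ w ∈ AddSubmonoid.closure (Set.range A₁ ∪ Set.range A₂) :=
  phi_mem (fun i => AddSubmonoid.subset_closure (.inl ⟨i, rfl⟩)) w

lemma phi_mem_closure_union_right (w : Fin r₂ → ℕ) :
    phi A₂ w ∈ AddSubmonoid.closure (Set.range A₁ ∪ Set.range A₂) :=
  phi_mem (fun i => AddSubmonoid.subset_closure (.inr ⟨i, rfl⟩)) w

lemma sum_append_mul_append (u₁ v₁ : Fin r₁ → ℕ) (u₂ v₂ : Fin r₂ → ℕ) :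
    ∑ i, Fin.append u₁ u₂ i * Fin.append v₁ v₂ i = ∑ i, u₁ i * v₁ i + ∑ i, u₂ i * v₂ i := by
  simp [Fin.sum_univ_add]

lemma Rrel.append_right {u v : Fin r₁ → ℕ} (h : Rrel A₁ b u v) (w : Fin r₂ → ℕ) :
    Rrel (Fin.append A₁ A₂) (b + phi A₂ w) (Fin.append u w) (Fin.append v w) :=
  Relation.ReflTransGen.lift (fun u => Fin.append u w) (fun _ _ hs =>
    ⟨by rw [phi_append, hs.1], by rw [phi_append, hs.2.1], by
      rw [sum_append_mul_append]; exact fun h0 => hs.2.2 (Nat.eq_zero_of_add_eq_zero_right h0)⟩)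
    _ _ h

lemma Rrel.append_left {u v : Fin r₂ → ℕ} (h : Rrel A₂ b u v) (w : Fin r₁ → ℕ) :
    Rrel (Fin.append A₁ A₂) (phi A₁ w + b) (Fin.append w u) (Fin.append w v) :=
  Relation.ReflTransGen.lift (fun u => Fin.append w u) (fun _ _ hs =>
    ⟨by rw [phi_append, hs.1], by rw [phi_append, hs.2.1], by
      rw [sum_append_mul_append]; exact fun h0 => hs.2.2 (Nat.eq_zero_of_add_eq_zero_left h0)⟩)
    _ _ h

lemma rrel_append_of_phi_left_eq {u v : Fin r₁ → ℕ} {w : Fin r₂ → ℕ} (hu : phi A₁ u = b)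
    (hv : phi A₁ v = b) (h : w ≠ 0 ∨ ¬ IsBetti A₁ b) :
    Rrel (Fin.append A₁ A₂) (b + phi A₂ w) (Fin.append u w) (Fin.append v w) := by
  rcases h with hw | hb
  · refine .single ⟨by rw [phi_append, hu], by rw [phi_append, hv], ?_⟩
    rw [sum_append_mul_append]
    exact fun h0 => sum_mul_self_ne_zero hw (Nat.eq_zero_of_add_eq_zero_left h0)
  · exact (rrel_of_not_isBetti hb hu hv).append_right w

lemma rrel_append_of_phi_right_eq {u v : Fin r₂ → ℕ} {w : Fin r₁ → ℕ} (hu : phi A₂ u = b)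
    (hv : phi A₂ v = b) (h : w ≠ 0 ∨ ¬ IsBetti A₂ b) :
    Rrel (Fin.append A₁ A₂) (phi A₁ w + b) (Fin.append w u) (Fin.append w v) := by
  rcases h with hw | hb
  · refine .single ⟨by rw [phi_append, hu], by rw [phi_append, hv], ?_⟩
    rw [sum_append_mul_append]
    exact fun h0 => sum_mul_self_ne_zero hw (Nat.eq_zero_of_add_eq_zero_right h0)
  · exact (rrel_of_not_isBetti hb hu hv).append_left w

end Append

section Swap

variable {r₁ r₂ : ℕ} {A₁ : Fin r₁ → M} {A₂ : Fin r₂ → M} {a d : M}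
  {δ₁ : Fin r₁ → ℕ} {δ₂ : Fin r₂ → ℕ}

lemma step_append_swap (hδ₁ : phi A₁ δ₁ = d) (hδ₂ : phi A₂ δ₂ = d) {x₁ : Fin r₁ → ℕ}
    {x₂ : Fin r₂ → ℕ} (hx : x₁ ≠ 0 ∨ x₂ ≠ 0) (ha : phi A₁ x₁ + phi A₂ x₂ + d = a) :
    step (Fin.append A₁ A₂) a (Fin.append (x₁ + δ₁) x₂) (Fin.append x₁ (x₂ + δ₂)) := by
  refine ⟨by rw [phi_append, phi_add, hδ₁, ← ha]; abel,
    by rw [phi_append, phi_add, hδ₂, ← ha]; abel, ?_⟩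
  rw [sum_append_mul_append]
  rcases hx with hx | hx
  · obtain ⟨i, hi⟩ : ∃ i, x₁ i ≠ 0 := Function.ne_iff.1 hx
    have : ∑ i, (x₁ + δ₁) i * x₁ i ≠ 0 := sum_mul_ne_zero_iff.2 ⟨i, by simp [hi], hi⟩
    omega
  · obtain ⟨i, hi⟩ : ∃ i, x₂ i ≠ 0 := Function.ne_iff.1 hx
    have : ∑ i, x₂ i * (x₂ + δ₂) i ≠ 0 := sum_mul_ne_zero_iff.2 ⟨i, hi, by simp [hi]⟩
    omega

lemma rrel_append_swap_of_ne_zero (hδ₁ : phi A₁ δ₁ = d) (hδ₂ : phi A₂ δ₂ = d)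
    {x₁ : Fin r₁ → ℕ} (k : ℕ) {x₂ : Fin r₂ → ℕ} (hx : x₁ ≠ 0 ∨ x₂ ≠ 0)
    (ha : phi A₁ x₁ + phi A₂ x₂ + k • d = a) :
    Rrel (Fin.append A₁ A₂) a (Fin.append (x₁ + k • δ₁) x₂) (Fin.append x₁ (x₂ + k • δ₂)) := by
  induction k generalizing x₂ with
  | zero => simpa using .refl
  | succ k ih =>
    have hfirst : step (Fin.append A₁ A₂) a (Fin.append (x₁ + k • δ₁ + δ₁) x₂)
        (Fin.append (x₁ + k • δ₁) (x₂ + δ₂)) :=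
      step_append_swap hδ₁ hδ₂ (hx.imp_left fun h => by simp [h])
        (by rw [phi_add, phi_nsmul, hδ₁, ← ha, succ_nsmul]; abel)
    have hrest := ih (x₂ := x₂ + δ₂) (hx.imp_right fun h => by simp [h])
      (by rw [phi_add, hδ₂, ← ha, succ_nsmul]; abel)
    rw [succ_nsmul, ← add_assoc, succ_nsmul, add_comm (k • δ₂), ← add_assoc]
    exact .head hfirst hrest

lemma rrel_append_swap (hδ₁ : phi A₁ δ₁ = d) (hδ₂ : phi A₂ δ₂ = d) {x₁ : Fin r₁ → ℕ}
    {x₂ : Fin r₂ → ℕ} {k : ℕ} (ha : phi A₁ x₁ + phi A₂ x₂ + k • d = a) (had : a ≠ d) :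
    Rrel (Fin.append A₁ A₂) a (Fin.append (x₁ + k • δ₁) x₂) (Fin.append x₁ (x₂ + k • δ₂)) := by
  by_cases hx : x₁ ≠ 0 ∨ x₂ ≠ 0
  · exact rrel_append_swap_of_ne_zero hδ₁ hδ₂ k hx ha
  obtain ⟨rfl, rfl⟩ : x₁ = 0 ∧ x₂ = 0 := by simpa only [not_or, not_not] using hx
  simp only [phi_zero, zero_add] at ha
  have hδ₁0 : δ₁ ≠ 0 := by rintro rfl; simp [← hδ₁, ← ha] at had
  match k with
  | 0 => simpa using .refl
  | 1 => exact absurd (by simpa using ha.symm) had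
  | k + 2 =>
    have hδ₂0 : δ₂ ≠ 0 := by rintro rfl; simp [← hδ₂, ← ha] at had
    have hladder := rrel_append_swap_of_ne_zero (a := a) hδ₁ hδ₂ (x₂ := 0) (k + 1) (.inl hδ₁0)
      (by rw [hδ₁, phi_zero, add_zero, ← ha, succ_nsmul' _ (k + 1)])
    have hlast := step_append_swap (a := a) hδ₁ hδ₂ (x₁ := 0) (x₂ := (k + 1) • δ₂)
      (.inr (smul_ne_zero k.succ_ne_zero hδ₂0))
      (by rw [phi_zero, zero_add, phi_nsmul, hδ₂, ← ha, ← succ_nsmul])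
    rw [zero_add, zero_add, succ_nsmul' δ₁ (k + 1), succ_nsmul δ₂ (k + 1)]
    exact hladder.tail (by simpa using hlast)

lemma rrel_append_of_not_isBetti (hδ₁ : phi A₁ δ₁ = d) (hδ₂ : phi A₂ δ₂ = d)
    (h₁ : ¬ IsBetti A₁ a) (h₂ : ¬ IsBetti A₂ a) (had : a ≠ d)
    {u₁ v₁ : Fin r₁ → ℕ} {u₂ v₂ : Fin r₂ → ℕ} {k : ℕ} (hu : phi A₁ u₁ + phi A₂ u₂ = a)
    (hk₁ : phi A₁ u₁ = phi A₁ v₁ + k • d) (hk₂ : phi A₂ v₂ = phi A₂ u₂ + k • d) :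
    Rrel (Fin.append A₁ A₂) a (Fin.append u₁ u₂) (Fin.append v₁ v₂) := by
  have hv : phi A₁ v₁ + phi A₂ v₂ = a := by rw [← hu, hk₁, hk₂]; abel
  have hleft : Rrel (Fin.append A₁ A₂) a (Fin.append u₁ u₂) (Fin.append (v₁ + k • δ₁) u₂) := by
    refine hu ▸ rrel_append_of_phi_left_eq rfl ?_ ((ne_or_eq u₂ 0).imp_right fun h => ?_)
    · rw [phi_add, phi_nsmul, hδ₁, hk₁]
    · simpa [h, ← hu] using h₁
  have hswap : Rrel (Fin.append A₁ A₂) a (Fin.append (v₁ + k • δ₁) u₂)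
      (Fin.append v₁ (u₂ + k • δ₂)) :=
    rrel_append_swap hδ₁ hδ₂ (by rw [← hu, hk₁]; abel) had
  have hright : Rrel (Fin.append A₁ A₂) a (Fin.append v₁ (u₂ + k • δ₂)) (Fin.append v₁ v₂) := by
    refine hv ▸ rrel_append_of_phi_right_eq ?_ rfl ((ne_or_eq v₁ 0).imp_right fun h => ?_)
    · rw [phi_add, phi_nsmul, hδ₂, hk₂]
    · simpa [h, ← hv] using h₂
  exact (hleft.trans hswap).trans hright

end Swap

section Reindex

variable {r' : ℕ} {a : M}

lemma phi_comp_equiv (e : Fin r' ≃ Fin r) (B : Fin r → M) (u : Fin r → ℕ) :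
    phi (B ∘ e) (u ∘ e) = phi B u :=
  Fintype.sum_equiv e _ _ fun _ => rfl

lemma IsBetti.of_comp_equiv (e : Fin r' ≃ Fin r) {B : Fin r → M} (h : IsBetti (B ∘ e) a) :
    IsBetti B a := by
  obtain ⟨u, v, hu, hv, huv⟩ := h
  have hcomp (w : Fin r' → ℕ) : (w ∘ e.symm) ∘ e = w := by ext; simp
  refine ⟨u ∘ e.symm, v ∘ e.symm, by rwa [← phi_comp_equiv e, hcomp],
    by rwa [← phi_comp_equiv e, hcomp], fun h => huv ?_⟩
  rw [← hcomp u, ← hcomp v]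
  refine Relation.ReflTransGen.lift (· ∘ e) (fun x y hs => ⟨?_, ?_, ?_⟩) _ _ h
  · rw [phi_comp_equiv]; exact hs.1
  · rw [phi_comp_equiv]; exact hs.2.1
  · exact (Fintype.sum_equiv e _ (fun i => x i * y i) fun _ => rfl).trans_ne hs.2.2

lemma IsBetti.append_comm {r₁ r₂ : ℕ} {A₁ : Fin r₁ → M} {A₂ : Fin r₂ → M}
    (h : IsBetti (Fin.append A₂ A₁) a) : IsBetti (Fin.append A₁ A₂) a :=
  .of_comp_equiv finAddFlip (Fin.append_eq_append_comp_finAddFlip A₁ A₂ ▸ h)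

end Reindex

section Gluing

variable {G : Type*} [AddCommGroup G] {r₁ r₂ : ℕ} {A₁ : Fin r₁ → G} {A₂ : Fin r₂ → G} {a d : G}

lemma phi_mem_addSubgroupClosure (A : Fin r → G) (u : Fin r → ℕ) :
    phi A u ∈ AddSubgroup.closure (Set.range A) :=
  AddSubgroup.sum_mem _ fun i _ => nsmul_mem (AddSubgroup.subset_closure (Set.mem_range_self i)) _

lemma not_isBetti_append (hd₁ : d ∈ AddSubmonoid.closure (Set.range A₁))
    (hd₂ : d ∈ AddSubmonoid.closure (Set.range A₂))
    (hglue : AddSubgroup.closure (Set.range A₁) ⊓ AddSubgroup.closure (Set.range A₂) ≤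
      AddSubgroup.zmultiples d)
    (h₁ : ¬ IsBetti A₁ a) (h₂ : ¬ IsBetti A₂ a) (had : a ≠ d) :
    ¬ IsBetti (Fin.append A₁ A₂) a := by
  obtain ⟨δ₁, hδ₁⟩ := exists_phi_eq_of_mem_closure hd₁
  obtain ⟨δ₂, hδ₂⟩ := exists_phi_eq_of_mem_closure hd₂
  rintro ⟨u, v, hu, hv, huv⟩
  obtain ⟨u₁, u₂, rfl⟩ := Fin.exists_eq_append u
  obtain ⟨v₁, v₂, rfl⟩ := Fin.exists_eq_append v
  rw [phi_append] at hu hv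
  have hdiff : phi A₂ v₂ - phi A₂ u₂ = phi A₁ u₁ - phi A₁ v₁ := by
    rw [sub_eq_sub_iff_add_eq_add, add_comm, hv, hu]
  have hdiff' : phi A₂ u₂ - phi A₂ v₂ = phi A₁ v₁ - phi A₁ u₁ := by
    rw [← neg_sub, hdiff, neg_sub]
  obtain ⟨z, hz⟩ := AddSubgroup.mem_zmultiples_iff.1 <| hglue <| AddSubgroup.mem_inf.2
    ⟨hdiff ▸ sub_mem (phi_mem_addSubgroupClosure A₁ u₁) (phi_mem_addSubgroupClosure A₁ v₁),
      sub_mem (phi_mem_addSubgroupClosure A₂ v₂) (phi_mem_addSubgroupClosure A₂ u₂)⟩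
  obtain ⟨k, rfl | rfl⟩ := Int.eq_nat_or_neg z
  · rw [natCast_zsmul] at hz
    exact huv (rrel_append_of_not_isBetti hδ₁ hδ₂ h₁ h₂ had hu
      (eq_add_of_sub_eq' (hz.trans hdiff).symm) (eq_add_of_sub_eq' hz.symm))
  · rw [neg_zsmul, natCast_zsmul, neg_eq_iff_eq_neg, neg_sub] at hz
    exact huv (rrel_append_of_not_isBetti hδ₁ hδ₂ h₁ h₂ had hv
      (eq_add_of_sub_eq' (hz.trans hdiff').symm) (eq_add_of_sub_eq' hz.symm)).symm

/-- `S = ⟨A₁ ∪ A₂⟩` is reduced, `0` is not a generator, and `S` is the gluing of `⟨A₁⟩` and `⟨A₂⟩`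
along `d`. -/
structure IsGluing (A₁ : Fin r₁ → G) (A₂ : Fin r₂ → G) (d : G) : Prop where
  reduced : ∀ x ∈ AddSubmonoid.closure (Set.range A₁ ∪ Set.range A₂),
    -x ∈ AddSubmonoid.closure (Set.range A₁ ∪ Set.range A₂) → x = 0
  zero_notMem : (0 : G) ∉ Set.range A₁ ∪ Set.range A₂
  ne_zero : d ≠ 0
  mem_left : d ∈ AddSubmonoid.closure (Set.range A₁)
  mem_right : d ∈ AddSubmonoid.closure (Set.range A₂)
  inf_eq : AddSubgroup.closure (Set.range A₁) ⊓ AddSubgroup.closure (Set.range A₂) =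
    AddSubgroup.zmultiples d

namespace IsGluing

lemma symm (h : IsGluing A₁ A₂ d) : IsGluing A₂ A₁ d where
  reduced := Set.union_comm (Set.range A₁) _ ▸ h.reduced
  zero_notMem := Set.union_comm (Set.range A₁) _ ▸ h.zero_notMem
  ne_zero := h.ne_zero
  mem_left := h.mem_right
  mem_right := h.mem_left
  inf_eq := inf_comm (AddSubgroup.closure (Set.range A₁)) _ ▸ h.inf_eq

lemma mem_closure (h : IsGluing A₁ A₂ d) :
    d ∈ AddSubmonoid.closure (Set.range A₁ ∪ Set.range A₂) :=
  AddSubmonoid.closure_mono Set.subset_union_left h.mem_left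

lemma eq_zero_of_add_eq_zero (h : IsGluing A₁ A₂ d) {x y : G}
    (hx : x ∈ AddSubmonoid.closure (Set.range A₁ ∪ Set.range A₂))
    (hy : y ∈ AddSubmonoid.closure (Set.range A₁ ∪ Set.range A₂)) (hxy : x + y = 0) : x = 0 :=
  h.reduced x hx (neg_eq_of_add_eq_zero_right hxy ▸ hy)

lemma eq_zero_of_phi_left_eq_zero (h : IsGluing A₁ A₂ d) {w : Fin r₁ → ℕ} (hw : phi A₁ w = 0) :
    w = 0 := by
  by_contra hne
  obtain ⟨j, hj⟩ : ∃ j, w j ≠ 0 := Function.ne_iff.1 hne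
  rw [phi_eq_add_of_ne_zero A₁ hj] at hw
  exact h.zero_notMem (.inl ⟨j, h.eq_zero_of_add_eq_zero
    (AddSubmonoid.subset_closure (.inl ⟨j, rfl⟩)) (phi_mem_closure_union_left _) hw⟩)

lemma eq_zero_of_phi_right_eq_zero (h : IsGluing A₁ A₂ d) {w : Fin r₂ → ℕ} (hw : phi A₂ w = 0) :
    w = 0 :=
  h.symm.eq_zero_of_phi_left_eq_zero hw

lemma eq_zero_of_nsmul_eq_zero (h : IsGluing A₁ A₂ d) {k : ℕ} (hk : k • d = 0) : k = 0 := by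
  rcases k with _ | k
  · rfl
  · rw [succ_nsmul'] at hk
    exact absurd (h.eq_zero_of_add_eq_zero h.mem_closure (nsmul_mem h.mem_closure k) hk) h.ne_zero

lemma exists_nsmul_of_mem_left (h : IsGluing A₁ A₂ d)
    (ha : a ∈ AddSubgroup.closure (Set.range A₁)) {w₁ : Fin r₁ → ℕ} {w₂ : Fin r₂ → ℕ}
    (hw : phi A₁ w₁ + phi A₂ w₂ = a) : ∃ k : ℕ, phi A₂ w₂ = k • d := by
  have hmem : phi A₂ w₂ ∈ AddSubgroup.zmultiples d := h.inf_eq ▸ AddSubgroup.mem_inf.2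
    ⟨eq_sub_of_add_eq' hw ▸ sub_mem ha (phi_mem_addSubgroupClosure A₁ w₁),
      phi_mem_addSubgroupClosure A₂ w₂⟩
  obtain ⟨z, hz⟩ := AddSubgroup.mem_zmultiples_iff.1 hmem
  obtain ⟨k, rfl | rfl⟩ := Int.eq_nat_or_neg z
  · exact ⟨k, by rw [← hz, natCast_zsmul]⟩
  · refine ⟨0, ?_⟩
    rw [zero_smul]
    exact h.eq_zero_of_add_eq_zero (phi_mem_closure_union_right w₂)
      (nsmul_mem h.mem_closure k) (by rw [← hz, neg_zsmul, natCast_zsmul, neg_add_cancel])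

lemma step_left_of_step_append (h : IsGluing A₁ A₂ d) {δ₁ : Fin r₁ → ℕ} (hδ₁ : phi A₁ δ₁ = d)
    {b₁ c₁ : Fin r₁ → ℕ} {b₂ c₂ : Fin r₂ → ℕ} {kb kc : ℕ}
    (hs : step (Fin.append A₁ A₂) a (Fin.append b₁ b₂) (Fin.append c₁ c₂))
    (hb : phi A₂ b₂ = kb • d) (hc : phi A₂ c₂ = kc • d) :
    step A₁ a (b₁ + kb • δ₁) (c₁ + kc • δ₁) := by
  obtain ⟨hbs, hcs, hdot⟩ := hs
  rw [phi_append] at hbs hcs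
  refine ⟨by rw [phi_add, phi_nsmul, hδ₁, ← hb, hbs], by rw [phi_add, phi_nsmul, hδ₁, ← hc, hcs],
    sum_mul_ne_zero_iff.2 ?_⟩
  rw [sum_append_mul_append] at hdot
  by_cases h₁ : ∑ i, b₁ i * c₁ i = 0
  · obtain ⟨i, hbi, hci⟩ := sum_mul_ne_zero_iff.1 (by omega : ∑ i, b₂ i * c₂ i ≠ 0)
    have hk {w : Fin r₂ → ℕ} {k : ℕ} (hw : phi A₂ w = k • d) (hwi : w i ≠ 0) : k ≠ 0 := by
      rintro rfl
      exact hwi (congrFun (h.eq_zero_of_phi_right_eq_zero (w := w) (by rw [hw, zero_smul])) i)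
    obtain ⟨j, hj⟩ : ∃ j, δ₁ j ≠ 0 :=
      Function.ne_iff.1 fun h0 => h.ne_zero (by rw [← hδ₁, h0]; exact phi_zero A₁)
    exact ⟨j, by simp [hk hb hbi, hj], by simp [hk hc hci, hj]⟩
  · obtain ⟨i, hbi, hci⟩ := sum_mul_ne_zero_iff.1 h₁
    exact ⟨i, by simp [hbi], by simp [hci]⟩

lemma isBetti_append_of_isBetti_left (h : IsGluing A₁ A₂ d) (hb : IsBetti A₁ a) :
    IsBetti (Fin.append A₁ A₂) a := by
  obtain ⟨δ₁, hδ₁⟩ := exists_phi_eq_of_mem_closure h.mem_left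
  obtain ⟨u, v, hu, hv, huv⟩ := hb
  have haG : a ∈ AddSubgroup.closure (Set.range A₁) := hu ▸ phi_mem_addSubgroupClosure A₁ u
  refine ⟨Fin.append u 0, Fin.append v 0, by simp [phi_append, hu], by simp [phi_append, hv],
    fun huv' => huv ?_⟩
  suffices ∀ w, Rrel (Fin.append A₁ A₂) a (Fin.append u 0) w → ∀ w₁ w₂ (k : ℕ),
      w = Fin.append w₁ w₂ → phi A₂ w₂ = k • d → Rrel A₁ a u (w₁ + k • δ₁) by
    simpa using this _ huv' v 0 0 rfl (by simp)
  intro w hw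
  induction hw with
  | refl =>
    intro w₁ w₂ k hw hk
    obtain ⟨rfl, rfl⟩ := Fin.append_inj.1 hw
    rw [h.eq_zero_of_nsmul_eq_zero (k := k) (by rw [← hk, phi_zero]), zero_smul, add_zero]
    exact .refl
  | @tail b c _ hs ih =>
    intro c₁ c₂ kc hc hkc
    subst hc
    obtain ⟨b₁, b₂, rfl⟩ := Fin.exists_eq_append b
    obtain ⟨kb, hkb⟩ := h.exists_nsmul_of_mem_left haG (by rw [← phi_append]; exact hs.1)
    exact (ih b₁ b₂ kb rfl hkb).tail (h.step_left_of_step_append hδ₁ hs hkb hkc)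

lemma isBetti_append_of_isBetti_right (h : IsGluing A₁ A₂ d) (hb : IsBetti A₂ a) :
    IsBetti (Fin.append A₁ A₂) a :=
  (h.symm.isBetti_append_of_isBetti_left hb).append_comm

lemma eq_zero_of_step_append (h : IsGluing A₁ A₂ d) {b₁ c₁ : Fin r₁ → ℕ} {c₂ : Fin r₂ → ℕ}
    (hs : step (Fin.append A₁ A₂) d (Fin.append b₁ 0) (Fin.append c₁ c₂)) : c₂ = 0 := by
  obtain ⟨-, hc, hdot⟩ := hs
  rw [phi_append] at hc
  rw [sum_append_mul_append] at hdot
  obtain ⟨i, -, hci⟩ := sum_mul_ne_zero_iff.1 (by simpa using hdot)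
  have hdG : d ∈ AddSubgroup.closure (Set.range A₁) :=
    (AddSubmonoid.closure_le (S := (AddSubgroup.closure (Set.range A₁)).toAddSubmonoid)).2
      AddSubgroup.subset_closure h.mem_left
  obtain ⟨_ | k, hk⟩ := h.exists_nsmul_of_mem_left hdG hc
  · exact h.eq_zero_of_phi_right_eq_zero (by rw [hk, zero_smul])
  · rw [hk, succ_nsmul, ← add_assoc] at hc
    have hc₁ : phi A₁ c₁ = 0 := h.eq_zero_of_add_eq_zero (phi_mem_closure_union_left c₁)
      (nsmul_mem h.mem_closure k) (add_eq_right.1 hc)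
    exact absurd (congrFun (h.eq_zero_of_phi_left_eq_zero hc₁) i) hci

lemma isBetti_append_self (h : IsGluing A₁ A₂ d) : IsBetti (Fin.append A₁ A₂) d := by
  obtain ⟨δ₁, hδ₁⟩ := exists_phi_eq_of_mem_closure h.mem_left
  obtain ⟨δ₂, hδ₂⟩ := exists_phi_eq_of_mem_closure h.mem_right
  refine ⟨Fin.append δ₁ 0, Fin.append 0 δ₂, by simp [phi_append, hδ₁],
    by simp [phi_append, hδ₂], fun hR => ?_⟩
  suffices ∀ w, Rrel (Fin.append A₁ A₂) d (Fin.append δ₁ 0) w → ∃ w₁, w = Fin.append w₁ 0 by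
    obtain ⟨w₁, hw⟩ := this _ hR
    exact h.ne_zero (by rw [← hδ₂, (Fin.append_inj.1 hw).2, phi_zero])
  intro w hw
  induction hw with
  | refl => exact ⟨δ₁, rfl⟩
  | @tail b c _ hs ih =>
    obtain ⟨b₁, rfl⟩ := ih
    obtain ⟨c₁, c₂, rfl⟩ := Fin.exists_eq_append c
    exact ⟨c₁, by rw [h.eq_zero_of_step_append hs]⟩

lemma isBetti_append_iff (h : IsGluing A₁ A₂ d) :
    IsBetti (Fin.append A₁ A₂) a ↔ (IsBetti A₁ a ∨ IsBetti A₂ a) ∨ a = d := by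
  refine ⟨fun ha => ?_, ?_⟩
  · by_contra hne
    simp only [not_or] at hne
    exact not_isBetti_append h.mem_left h.mem_right h.inf_eq.le hne.1.1 hne.1.2 hne.2 ha
  · rintro ((ha | ha) | rfl)
    · exact h.isBetti_append_of_isBetti_left ha
    · exact h.isBetti_append_of_isBetti_right ha
    · exact h.isBetti_append_self

end IsGluing

end Gluing

theorem stmt7_general {n r₁ r₂ : ℕ} (A₁ : Fin r₁ → (Fin n → ℤ)) (A₂ : Fin r₂ → (Fin n → ℤ))
    (hmin : ∀ i : Fin (r₁ + r₂), ¬ ∃ u : Fin (r₁ + r₂) → ℕ,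
      u i = 0 ∧ phi (Fin.append A₁ A₂) u = Fin.append A₁ A₂ i)
    (hred : ∀ x ∈ AddSubmonoid.closure (Set.range (Fin.append A₁ A₂)),
      -x ∈ AddSubmonoid.closure (Set.range (Fin.append A₁ A₂)) → x = 0)
    (d : Fin n → ℤ) (hd0 : d ≠ 0)
    (hd1 : d ∈ AddSubmonoid.closure (Set.range A₁))
    (hd2 : d ∈ AddSubmonoid.closure (Set.range A₂))
    (hglue : AddSubgroup.closure (Set.range A₁) ⊓ AddSubgroup.closure (Set.range A₂)
      = AddSubgroup.zmultiples d) :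
    {s : Fin n → ℤ | IsBetti (Fin.append A₁ A₂) s}
      = {s | IsBetti A₁ s} ∪ {s | IsBetti A₂ s} ∪ {d} := by
  have hrange := Fin.range_append A₁ A₂
  have h : IsGluing A₁ A₂ d :=
    { reduced := hrange ▸ hred
      zero_notMem := hrange ▸ fun ⟨i, hi⟩ => hmin i ⟨0, rfl, by rw [phi_zero, hi]⟩
      ne_zero := hd0
      mem_left := hd1
      mem_right := hd2
      inf_eq := hglue }
  ext s
  exact h.isBetti_append_iff

/-- If `S` is the gluing of `S₁` and `S₂` with `G(S₁) ∩ G(S₂) = dℤ`, then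
`Betti(S) = Betti(S₁) ∪ Betti(S₂) ∪ {d}`. -/
theorem stmt7 {n r₁ r₂ : ℕ} (A₁ : Fin r₁ → (Fin n → ℤ)) (A₂ : Fin r₂ → (Fin n → ℤ))
    (hdisj : Disjoint (Set.range A₁) (Set.range A₂))
    (hmin : ∀ i : Fin (r₁ + r₂), ¬ ∃ u : Fin (r₁ + r₂) → ℕ,
      u i = 0 ∧ phi (Fin.append A₁ A₂) u = Fin.append A₁ A₂ i)
    (hred : ∀ x ∈ AddSubmonoid.closure (Set.range (Fin.append A₁ A₂)),
      -x ∈ AddSubmonoid.closure (Set.range (Fin.append A₁ A₂)) → x = 0)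
    (d : Fin n → ℤ) (hd0 : d ≠ 0)
    (hd1 : d ∈ AddSubmonoid.closure (Set.range A₁))
    (hd2 : d ∈ AddSubmonoid.closure (Set.range A₂))
    (hglue : AddSubgroup.closure (Set.range A₁) ⊓ AddSubgroup.closure (Set.range A₂)
      = AddSubgroup.zmultiples d) :
    {s : Fin n → ℤ | IsBetti (Fin.append A₁ A₂) s}
      = {s | IsBetti A₁ s} ∪ {s | IsBetti A₂ s} ∪ {d} :=
  stmt7_general A₁ A₂ hmin hred d hd0 hd1 hd2 hglue
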